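/- arXiv:2201.04708 — 3 statements merged into one kernel-verified Lean document; each statement's English description precedes it below -/
import Mathlib

section
/- Let t ∈ ℚ with t > 0 and t ≠ 1. Then Φ maps E_t(ℚ) \ A_t into 𝒮_t, the map Φ : E_t(ℚ) \ A_t → 𝒮_t is surjective, and for every triple (a,b,c) ∈ 𝒮_t the fiber {P ∈ E_t(ℚ) \ A_t : Φ(P) = (a,b,c)} has exactly eight elements. -/
open WeierstrassCurve WeierstrassCurve.Affine

noncomputable section

/-- The elliptic curve `E_t : y² = x(x+1)(x+t²) = x³ + (1+t²)x² + t²x` over `ℚ`. -/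
def Ecurve (t : ℚ) : WeierstrassCurve.Affine ℚ :=
  { a₁ := 0, a₂ := 1 + t ^ 2, a₃ := 0, a₄ := t ^ 2, a₆ := 0 }

/-- The coordinates of the seven affine points of `A_t`. -/
def Acoords (t : ℚ) : Set (ℚ × ℚ) :=
  {(0, 0), (-1, 0), (-t ^ 2, 0), (-t, t * (t - 1)), (-t, -(t * (t - 1))),
    (t, t * (t + 1)), (t, -(t * (t + 1)))}

/-- The subset `A_t` of `E_t(ℚ)`: the point at infinity together with the seven affine
points whose coordinates lie in `Acoords t`. -/
def Aset (t : ℚ) : Set (Ecurve t).Point :=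
  {P | P = 0 ∨ ∃ (x y : ℚ) (h : (Ecurve t).Nonsingular x y),
    (x, y) ∈ Acoords t ∧ P = Point.some _ _ h}

/-- `𝒮_t`: triples `(a, b, c)` of positive rationals with `1 + a² = b²` and `t² + a² = c²`. -/
def Sset (t : ℚ) : Set (ℚ × ℚ × ℚ) :=
  {p | 0 < p.1 ∧ 0 < p.2.1 ∧ 0 < p.2.2 ∧
    1 + p.1 ^ 2 = p.2.1 ^ 2 ∧ t ^ 2 + p.1 ^ 2 = p.2.2 ^ 2}

/-- The map `Φ` on coordinates of affine points of `E_t(ℚ)`. -/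
def PhiTriple (t x y : ℚ) : ℚ × ℚ × ℚ :=
  (|(x ^ 2 - t ^ 2) / (2 * y)|, |(x ^ 2 + 2 * x + t ^ 2) / (2 * y)|,
    |(x ^ 2 + 2 * t ^ 2 * x + t ^ 2) / (2 * y)|)


/-! The signed map `(x, y) ↦ (u, v, w)`, with `u = (x² - t²)/2y`, `v = (x² + 2x + t²)/2y`,
`w = (x² + 2t²x + t²)/2y`, is a bijection from `E_t(ℚ) \ A_t` onto the rational points of the
curve `v² = 1 + u²`, `w² = t² + u²` with `u ≠ 0`. Its inverse is
`(u, v, w) ↦ ((u + v)(u + w), (u + v)(v + w)(u + w))`, because `u + v = x(x + 1)/y`,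
`u + w = x(x + t²)/y` and `v + w = (x + 1)(x + t²)/y`; the second coordinate vanishes only when
`v = -w` or `w = -u`, i.e. when `t² = 1` or `t = 0`. Since `Φ` is this bijection followed by
taking absolute values, its fibre over a triple of positive numbers consists of the preimages of
the eight sign changes of that triple. -/

lemma Ecurve_equation_iff {t x y : ℚ} :
    (Ecurve t).Equation x y ↔ y ^ 2 = x * (x + 1) * (x + t ^ 2) := by
  rw [equation_iff]
  simp only [Ecurve]
  constructor <;> intro h <;> linear_combination h

lemma Ecurve_nonsingular_of_ne_zero {t x y : ℚ} (h : y ^ 2 = x * (x + 1) * (x + t ^ 2))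
    (hy : y ≠ 0) : (Ecurve t).Nonsingular x y := by
  refine (nonsingular_iff' x y).2 ⟨Ecurve_equation_iff.2 h, Or.inr fun h' => hy ?_⟩
  simp only [Ecurve] at h'
  linarith

lemma mem_Acoords_iff {t x y : ℚ} (h : y ^ 2 = x * (x + 1) * (x + t ^ 2)) :
    (x, y) ∈ Acoords t ↔ y = 0 ∨ x ^ 2 = t ^ 2 := by
  simp only [Acoords, Set.mem_insert_iff, Set.mem_singleton_iff, Prod.mk.injEq]
  constructor
  · rintro (⟨-, rfl⟩ | ⟨-, rfl⟩ | ⟨-, rfl⟩ | ⟨rfl, -⟩ | ⟨rfl, -⟩ | ⟨rfl, -⟩ | ⟨rfl, -⟩) <;>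
      simp
  · rintro (rfl | hx)
    · have : x * (x + 1) * (x + t ^ 2) = 0 := by linear_combination -h
      simp only [mul_eq_zero, add_eq_zero_iff_eq_neg] at this
      rcases this with (rfl | rfl) | rfl <;> simp
    · rcases sq_eq_sq_iff_eq_or_eq_neg.1 hx with rfl | rfl
      · rcases sq_eq_sq_iff_eq_or_eq_neg.1 (show y ^ 2 = (x * (x + 1)) ^ 2 by
          linear_combination h) with rfl | rfl <;> simp
      · rcases sq_eq_sq_iff_eq_or_eq_neg.1 (show y ^ 2 = (t * (t - 1)) ^ 2 by
          linear_combination h) with rfl | rfl <;> simp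

lemma some_notMem_Aset_iff {t x y : ℚ} (h : (Ecurve t).Nonsingular x y) :
    Point.some _ _ h ∉ Aset t ↔ y ≠ 0 ∧ x ^ 2 ≠ t ^ 2 := by
  have hmem : Point.some _ _ h ∈ Aset t ↔ (x, y) ∈ Acoords t := by
    constructor
    · rintro (h0 | ⟨x', y', h', hxy, he⟩)
      · exact absurd h0 (Point.some_ne_zero h)
      · obtain ⟨rfl, rfl⟩ := Point.some.inj he
        exact hxy
    · exact fun hxy => Or.inr ⟨x, y, h, hxy, rfl⟩
  rw [hmem, mem_Acoords_iff (Ecurve_equation_iff.1 h.1)]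
  tauto

def signedPhi (t : ℚ) (q : ℚ × ℚ) : ℚ × ℚ × ℚ :=
  ((q.1 ^ 2 - t ^ 2) / (2 * q.2), (q.1 ^ 2 + 2 * q.1 + t ^ 2) / (2 * q.2),
    (q.1 ^ 2 + 2 * t ^ 2 * q.1 + t ^ 2) / (2 * q.2))

def absTriple (p : ℚ × ℚ × ℚ) : ℚ × ℚ × ℚ := (|p.1|, |p.2.1|, |p.2.2|)

lemma PhiTriple_eq_absTriple (t x y : ℚ) : PhiTriple t x y = absTriple (signedPhi t (x, y)) :=
  rfl

def signedSset (t : ℚ) : Set (ℚ × ℚ × ℚ) :=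
  {p | p.1 ≠ 0 ∧ 1 + p.1 ^ 2 = p.2.1 ^ 2 ∧ t ^ 2 + p.1 ^ 2 = p.2.2 ^ 2}

lemma absTriple_mem_Sset_iff {t : ℚ} {p : ℚ × ℚ × ℚ} :
    absTriple p ∈ Sset t ↔ p ∈ signedSset t := by
  obtain ⟨u, v, w⟩ := p
  simp only [absTriple, Sset, signedSset, Set.mem_ofPred_eq, sq_abs, abs_pos]
  constructor
  · rintro ⟨hu, -, -, hv, hw⟩
    exact ⟨hu, hv, hw⟩
  · rintro ⟨hu, hv, hw⟩
    refine ⟨hu, ?_, ?_, hv, hw⟩ <;> rintro rfl <;> nlinarith [sq_pos_of_ne_zero hu]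

lemma card_absTriple_fiber {a b c : ℚ} (ha : 0 < a) (hb : 0 < b) (hc : 0 < c) :
    {p : ℚ × ℚ × ℚ | absTriple p = (a, b, c)}.ncard = 8 := by
  have hfib : {p : ℚ × ℚ × ℚ | absTriple p = (a, b, c)} =
      ({a, -a} : Set ℚ) ×ˢ ({b, -b} : Set ℚ) ×ˢ ({c, -c} : Set ℚ) := by
    ext ⟨u, v, w⟩
    simp only [absTriple, Set.mem_ofPred_eq, Prod.mk.injEq, Set.mem_prod, Set.mem_insert_iff,
      Set.mem_singleton_iff, abs_eq ha.le, abs_eq hb.le, abs_eq hc.le]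
  have hpair {r : ℚ} (hr : 0 < r) : ({r, -r} : Set ℚ).ncard = 2 :=
    Set.ncard_pair (by linarith)
  rw [hfib, Set.ncard_prod, Set.ncard_prod, hpair ha, hpair hb, hpair hc]

lemma signedPhi_mem_signedSset {t x y : ℚ} (h : y ^ 2 = x * (x + 1) * (x + t ^ 2)) (hy : y ≠ 0)
    (hx : x ^ 2 ≠ t ^ 2) : signedPhi t (x, y) ∈ signedSset t := by
  refine ⟨div_ne_zero (sub_ne_zero.2 hx) (mul_ne_zero two_ne_zero hy), ?_, ?_⟩ <;>
    simp only [signedPhi]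
  · field_simp
    linear_combination 4 * h
  · field_simp
    linear_combination 4 * t ^ 2 * h

def signedPhiInv (p : ℚ × ℚ × ℚ) : ℚ × ℚ :=
  ((p.1 + p.2.1) * (p.1 + p.2.2), (p.1 + p.2.1) * (p.2.1 + p.2.2) * (p.1 + p.2.2))

section signedPhiInv

variable {t : ℚ} {p : ℚ × ℚ × ℚ} (hv : 1 + p.1 ^ 2 = p.2.1 ^ 2) (hw : t ^ 2 + p.1 ^ 2 = p.2.2 ^ 2)
include hv hw

lemma signedPhiInv_equation :
    (signedPhiInv p).2 ^ 2 =
      (signedPhiInv p).1 * ((signedPhiInv p).1 + 1) * ((signedPhiInv p).1 + t ^ 2) := by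
  obtain ⟨u, v, w⟩ := p
  simp only [signedPhiInv] at *
  linear_combination (u + v) * (u + w) *
    (-(u + w) * (v + w) * hv - (u + v) * (v + w) * hw - (t ^ 2 + u ^ 2 - w ^ 2) * hv)

lemma two_mul_signedPhiInv_snd :
    2 * p.1 * (signedPhiInv p).2 = (signedPhiInv p).1 ^ 2 - t ^ 2 ∧
    2 * p.2.1 * (signedPhiInv p).2 = (signedPhiInv p).1 ^ 2 + 2 * (signedPhiInv p).1 + t ^ 2 ∧
    2 * p.2.2 * (signedPhiInv p).2 =
      (signedPhiInv p).1 ^ 2 + 2 * t ^ 2 * (signedPhiInv p).1 + t ^ 2 := by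
  obtain ⟨u, v, w⟩ := p
  simp only [signedPhiInv] at *
  refine ⟨?_, ?_, ?_⟩
  · linear_combination (w + u) * (w - u) * hv + hw
  · linear_combination (w + u) * (w - u) * hv + hw - 2 * hw - 2 * (v + w) * (w + u) * hv
  · linear_combination (w + u) * (w - u) * hv + hw - 2 * t ^ 2 * hv - 2 * (u + v) * (v + w) * hw

lemma signedPhiInv_snd_ne_zero (ht0 : t ≠ 0) (ht1 : t ^ 2 ≠ 1) : (signedPhiInv p).2 ≠ 0 := by
  obtain ⟨u, v, w⟩ := p
  simp only [signedPhiInv, ne_eq, mul_eq_zero, add_eq_zero_iff_eq_neg, not_or] at *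
  refine ⟨⟨?_, ?_⟩, ?_⟩ <;> rintro rfl
  · linarith
  · exact ht1 (by linear_combination hw - hv)
  · exact ht0 (pow_eq_zero_iff two_ne_zero |>.1 (by linear_combination hw))

lemma signedPhi_signedPhiInv (hy : (signedPhiInv p).2 ≠ 0) :
    signedPhi t (signedPhiInv p) = p := by
  obtain ⟨h₁, h₂, h₃⟩ := two_mul_signedPhiInv_snd hv hw
  have hcancel (r : ℚ) : 2 * r * (signedPhiInv p).2 / (2 * (signedPhiInv p).2) = r := by
    field_simp
  simp only [signedPhi, ← h₁, ← h₂, ← h₃, hcancel]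

end signedPhiInv

lemma signedPhiInv_signedPhi {t x y : ℚ} (h : y ^ 2 = x * (x + 1) * (x + t ^ 2)) (hy : y ≠ 0) :
    signedPhiInv (signedPhi t (x, y)) = (x, y) := by
  have huv : (x ^ 2 - t ^ 2) / (2 * y) + (x ^ 2 + 2 * x + t ^ 2) / (2 * y) = x * (x + 1) / y := by
    field_simp
    ring
  have hvw : (x ^ 2 + 2 * x + t ^ 2) / (2 * y) + (x ^ 2 + 2 * t ^ 2 * x + t ^ 2) / (2 * y) =
      (x + 1) * (x + t ^ 2) / y := by
    field_simp
    ring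
  have huw : (x ^ 2 - t ^ 2) / (2 * y) + (x ^ 2 + 2 * t ^ 2 * x + t ^ 2) / (2 * y) =
      x * (x + t ^ 2) / y := by
    field_simp
    ring
  simp only [signedPhi, signedPhiInv, huv, hvw, huw, div_mul_div_comm, Prod.mk.injEq]
  constructor
  · rw [div_eq_iff (by positivity)]
    linear_combination -x * h
  · rw [div_eq_iff (by positivity)]
    linear_combination -(x * (x + 1) * (x + t ^ 2) + y ^ 2) * h

lemma signedPhiInv_nonsingular {t : ℚ} {p : ℚ × ℚ × ℚ} (ht0 : t ≠ 0) (ht1 : t ^ 2 ≠ 1)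
    (hp : p ∈ signedSset t) :
    (Ecurve t).Nonsingular (signedPhiInv p).1 (signedPhiInv p).2 :=
  Ecurve_nonsingular_of_ne_zero (signedPhiInv_equation hp.2.1 hp.2.2)
    (signedPhiInv_snd_ne_zero hp.2.1 hp.2.2 ht0 ht1)

open Classical in
def toPoint (t : ℚ) (q : ℚ × ℚ) : (Ecurve t).Point :=
  if h : (Ecurve t).Nonsingular q.1 q.2 then Point.some _ _ h else 0

lemma toPoint_eq_some {t : ℚ} {q : ℚ × ℚ} (h : (Ecurve t).Nonsingular q.1 q.2) :
    toPoint t q = Point.some _ _ h :=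
  dif_pos h

lemma injOn_toPoint_signedPhiInv {t : ℚ} (ht0 : t ≠ 0) (ht1 : t ^ 2 ≠ 1) :
    Set.InjOn (toPoint t ∘ signedPhiInv) (signedSset t) := by
  have hinv {q} (hq : q ∈ signedSset t) : signedPhi t (signedPhiInv q) = q :=
    signedPhi_signedPhiInv hq.2.1 hq.2.2 (signedPhiInv_snd_ne_zero hq.2.1 hq.2.2 ht0 ht1)
  intro p hp p' hp' he
  simp only [Function.comp_apply, toPoint_eq_some (signedPhiInv_nonsingular ht0 ht1 hp),
    toPoint_eq_some (signedPhiInv_nonsingular ht0 ht1 hp')] at he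
  obtain ⟨hx, hy⟩ := Point.some.inj he
  rw [← hinv hp, ← hinv hp', Prod.ext hx hy]

def phiFiber (t : ℚ) (s : ℚ × ℚ × ℚ) : Set (Ecurve t).Point :=
  {P | P ∉ Aset t ∧ ∃ (x y : ℚ) (h : (Ecurve t).Nonsingular x y),
    P = Point.some _ _ h ∧ PhiTriple t x y = s}

lemma phiFiber_eq_image {t : ℚ} {s : ℚ × ℚ × ℚ} (ht0 : t ≠ 0) (ht1 : t ^ 2 ≠ 1)
    (hs : s ∈ Sset t) :
    phiFiber t s = (toPoint t ∘ signedPhiInv) '' {p | absTriple p = s} := by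
  ext P
  constructor
  · rintro ⟨hA, x, y, h, rfl, hphi⟩
    obtain ⟨hy, -⟩ := (some_notMem_Aset_iff h).1 hA
    refine ⟨signedPhi t (x, y), hphi, ?_⟩
    simp only [Function.comp_apply, signedPhiInv_signedPhi (Ecurve_equation_iff.1 h.1) hy]
    exact toPoint_eq_some h
  · rintro ⟨p, rfl, rfl⟩
    have hp : p ∈ signedSset t := absTriple_mem_Sset_iff.1 hs
    have hns := signedPhiInv_nonsingular ht0 ht1 hp
    obtain ⟨hmul, -, -⟩ := two_mul_signedPhiInv_snd hp.2.1 hp.2.2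
    have hy := signedPhiInv_snd_ne_zero hp.2.1 hp.2.2 ht0 ht1
    refine ⟨?_, _, _, hns, toPoint_eq_some hns, ?_⟩
    · rw [Function.comp_apply, toPoint_eq_some hns, some_notMem_Aset_iff]
      refine ⟨hy, fun hx => ?_⟩
      exact mul_ne_zero (mul_ne_zero two_ne_zero hp.1) hy (by linear_combination hmul + hx)
    · rw [PhiTriple_eq_absTriple, signedPhi_signedPhiInv hp.2.1 hp.2.2 hy]

lemma ncard_phiFiber {t : ℚ} {s : ℚ × ℚ × ℚ} (ht0 : t ≠ 0) (ht1 : t ^ 2 ≠ 1) (hs : s ∈ Sset t) :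
    (phiFiber t s).ncard = 8 := by
  obtain ⟨a, b, c⟩ := s
  obtain ⟨ha, hb, hc, -⟩ := id hs
  have hsub : {p | absTriple p = (a, b, c)} ⊆ signedSset t := fun p hp =>
    absTriple_mem_Sset_iff.1 (Set.mem_of_eq_of_mem hp hs)
  rw [phiFiber_eq_image ht0 ht1 hs,
    ((injOn_toPoint_signedPhiInv ht0 ht1).mono hsub).ncard_image,
    card_absTriple_fiber ha hb hc]

theorem statement2 (t : ℚ) (ht : 0 < t) (ht1 : t ≠ 1) :
    (∀ (x y : ℚ) (h : (Ecurve t).Nonsingular x y),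
      Point.some _ _ h ∉ Aset t → PhiTriple t x y ∈ Sset t) ∧
    (∀ s ∈ Sset t, ∃ (x y : ℚ) (h : (Ecurve t).Nonsingular x y),
      Point.some _ _ h ∉ Aset t ∧ PhiTriple t x y = s) ∧
    (∀ s ∈ Sset t,
      {P : (Ecurve t).Point | P ∉ Aset t ∧ ∃ (x y : ℚ) (h : (Ecurve t).Nonsingular x y),
        P = Point.some _ _ h ∧ PhiTriple t x y = s}.ncard = 8) := by
  have ht0 : t ≠ 0 := ht.ne'
  have ht1' : t ^ 2 ≠ 1 := (pow_eq_one_iff_of_nonneg ht.le two_ne_zero).not.2 ht1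
  refine ⟨fun x y h hA => ?_, fun s hs => ?_, fun s hs => ncard_phiFiber ht0 ht1' hs⟩
  · obtain ⟨hy, hx⟩ := (some_notMem_Aset_iff h).1 hA
    rw [PhiTriple_eq_absTriple, absTriple_mem_Sset_iff]
    exact signedPhi_mem_signedSset (Ecurve_equation_iff.1 h.1) hy hx
  · obtain ⟨-, hA, x, y, h, rfl, hphi⟩ := Set.nonempty_of_ncard_ne_zero (s := phiFiber t s)
      (by rw [ncard_phiFiber ht0 ht1' hs]; norm_num)
    exact ⟨x, y, h, hA, hphi⟩
end
end

section
/- Let r ∈ ℚ \ {−1,0,1} and set t = ((1−r²)/(2r))². Then t ∉ {−1,0,1}, and the point (u,v) with u = (1−r)(1+r)³/(4r³) and v = (1−r)(1+r)³(1+r²)(r²−2r−1)/(16r⁵) lies on E_t(ℚ) and has order exactly 8 in the group E_t(ℚ). -/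
/-!
Write `t = ((1 - r²)/(2r))²`. The tangent to `E_t` at `P = (u, v)` has slope `(r⁴ - 4r - 1)/(4r²)`,
and the doubling formula gives `2P = (t, -t(t+1))`; the tangent there has slope `-(t+1)`, so
`4P = (0, 0)`, a point of order `2`. Hence `8P = O ≠ 4P`. The exclusion `t ≠ 1` reduces to
`(r ∓ 1)² ≠ 2`, i.e. to the irrationality of `√2`.
-/

open WeierstrassCurve WeierstrassCurve.Affine

noncomputable section

lemma Rat.sq_ne_two (q : ℚ) : q ^ 2 ≠ 2 := fun h =>
  Nat.prime_two.not_isSquare (Rat.isSquare_ofNat_iff.mp ⟨q, by rw [← h, sq]⟩)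

theorem addOrderOf_eq_eight_of_two_nsmul {G : Type*} [AddMonoid G] {P Q T : G}
    (hP : 2 • P = Q) (hQ : 2 • Q = T) (hT : 2 • T = 0) (hT0 : T ≠ 0) : addOrderOf P = 8 := by
  have h4 : 2 ^ 2 • P = T := by rw [pow_two, mul_nsmul, hP, hQ]
  have h8 : 2 ^ 3 • P = 0 := by rw [pow_succ, mul_nsmul, h4, hT]
  have : Fact (Nat.Prime 2) := ⟨Nat.prime_two⟩
  exact addOrderOf_eq_prime_pow (h4 ▸ hT0) h8

namespace Ecurve

variable {t : ℚ}

lemma negY_eq (t x y : ℚ) : (Ecurve t).negY x y = -y := by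
  simp [negY, Ecurve]

lemma nonsingular_of_Y_ne_zero {x y : ℚ} (heq : y ^ 2 = x * (x + 1) * (x + t ^ 2)) (hy : y ≠ 0) :
    (Ecurve t).Nonsingular x y := by
  rw [nonsingular_iff', equation_iff]
  simp only [Ecurve]
  exact ⟨by linear_combination heq, Or.inr (by simpa using hy)⟩

lemma nonsingular_zero_zero (ht : t ≠ 0) : (Ecurve t).Nonsingular 0 0 := by
  simp [Ecurve, ht]

lemma two_nsmul_some_zero_zero (ht : t ≠ 0) :
    2 • Point.some 0 0 (nonsingular_zero_zero ht) = 0 := by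
  rw [two_nsmul]
  exact Point.add_self_of_Y_eq (by rw [negY_eq, neg_zero])

lemma two_nsmul_some {x y ℓ x' y' : ℚ} {h : (Ecurve t).Nonsingular x y}
    {h' : (Ecurve t).Nonsingular x' y'} (hy : y ≠ 0)
    (hℓ : 2 * y * ℓ = 3 * x ^ 2 + 2 * (1 + t ^ 2) * x + t ^ 2)
    (hx' : x' = ℓ ^ 2 - (1 + t ^ 2) - 2 * x) (hy' : y' = ℓ * (x - x') - y) :
    2 • Point.some x y h = Point.some x' y' h' := by
  have hy_ne : y ≠ (Ecurve t).negY x y := by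
    rw [negY_eq]
    contrapose! hy
    linarith
  have hslope : (Ecurve t).slope x x y y = ℓ := by
    rw [slope_of_Y_ne rfl hy_ne, negY_eq, div_eq_iff (by contrapose! hy; linarith)]
    simp only [Ecurve]
    linear_combination -hℓ
  rw [two_nsmul, Point.add_self_of_Y_ne hy_ne, Point.some.injEq, hslope]
  simp only [addY, negAddY, addX, negY_eq]
  simp only [Ecurve]
  subst hx' hy'
  constructor <;> ring

lemma nonsingular_t_neg_t_mul_t_add_one (ht : t ≠ 0) (ht' : t ≠ -1) :
    (Ecurve t).Nonsingular t (-(t * (t + 1))) :=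
  nonsingular_of_Y_ne_zero (by ring)
    (neg_ne_zero.mpr (mul_ne_zero ht fun h => ht' (eq_neg_of_add_eq_zero_left h)))

lemma two_nsmul_some_t_neg_t_mul_t_add_one (ht : t ≠ 0) (ht' : t ≠ -1) :
    2 • Point.some _ _ (nonsingular_t_neg_t_mul_t_add_one ht ht') =
      Point.some _ _ (nonsingular_zero_zero ht) :=
  two_nsmul_some (ℓ := -(t + 1))
    (neg_ne_zero.mpr (mul_ne_zero ht fun h => ht' (eq_neg_of_add_eq_zero_left h)))
    (by ring) (by ring) (by ring)

end Ecurve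

def orderEightParam (r : ℚ) : ℚ := ((1 - r ^ 2) / (2 * r)) ^ 2

def orderEightX (r : ℚ) : ℚ := (1 - r) * (1 + r) ^ 3 / (4 * r ^ 3)

def orderEightY (r : ℚ) : ℚ :=
  (1 - r) * (1 + r) ^ 3 * (1 + r ^ 2) * (r ^ 2 - 2 * r - 1) / (16 * r ^ 5)

section OrderEight

variable {r : ℚ}

lemma orderEightParam_ne_neg_one (r : ℚ) : orderEightParam r ≠ -1 :=
  (neg_one_lt_zero.trans_le (sq_nonneg _)).ne'

lemma orderEightParam_ne_zero (hr1 : r ≠ -1) (hr0 : r ≠ 0) (hr1' : r ≠ 1) :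
    orderEightParam r ≠ 0 := by
  have : 1 - r ^ 2 ≠ 0 := by
    rw [show 1 - r ^ 2 = (1 - r) * (1 + r) by ring]
    exact mul_ne_zero (sub_ne_zero.mpr hr1'.symm) fun h => hr1 (eq_neg_of_add_eq_zero_right h)
  exact pow_ne_zero 2 (div_ne_zero this (mul_ne_zero two_ne_zero hr0))

lemma orderEightParam_ne_one (hr0 : r ≠ 0) : orderEightParam r ≠ 1 := by
  intro h
  have : ((r - 1) ^ 2 - 2) * ((r + 1) ^ 2 - 2) = 0 := by
    unfold orderEightParam at h
    field_simp at h
    linear_combination h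
  rcases mul_eq_zero.mp this with h | h
  exacts [Rat.sq_ne_two _ (sub_eq_zero.mp h), Rat.sq_ne_two _ (sub_eq_zero.mp h)]

lemma orderEightY_ne_zero (hr1 : r ≠ -1) (hr0 : r ≠ 0) (hr1' : r ≠ 1) :
    orderEightY r ≠ 0 := by
  have h1 : 1 - r ≠ 0 := sub_ne_zero.mpr hr1'.symm
  have h2 : 1 + r ≠ 0 := fun h => hr1 (eq_neg_of_add_eq_zero_right h)
  have h3 : r ^ 2 - 2 * r - 1 ≠ 0 := fun h => Rat.sq_ne_two (r - 1) (by linear_combination h)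
  unfold orderEightY
  positivity

lemma nonsingular_orderEight (hr1 : r ≠ -1) (hr0 : r ≠ 0) (hr1' : r ≠ 1) :
    (Ecurve (orderEightParam r)).Nonsingular (orderEightX r) (orderEightY r) := by
  refine Ecurve.nonsingular_of_Y_ne_zero ?_ (orderEightY_ne_zero hr1 hr0 hr1')
  unfold orderEightParam orderEightX orderEightY
  field_simp
  ring

lemma two_nsmul_orderEight (hr1 : r ≠ -1) (hr0 : r ≠ 0) (hr1' : r ≠ 1) :
    2 • Point.some _ _ (nonsingular_orderEight hr1 hr0 hr1') =
      Point.some _ _ (Ecurve.nonsingular_t_neg_t_mul_t_add_one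
        (orderEightParam_ne_zero hr1 hr0 hr1') (orderEightParam_ne_neg_one r)) := by
  refine Ecurve.two_nsmul_some (ℓ := (r ^ 4 - 4 * r - 1) / (4 * r ^ 2))
    (orderEightY_ne_zero hr1 hr0 hr1') ?_ ?_ ?_ <;>
  · simp only [orderEightParam, orderEightX, orderEightY]
    field_simp
    ring

end OrderEight

theorem statement8 (r : ℚ) (hr1 : r ≠ -1) (hr0 : r ≠ 0) (hr1' : r ≠ 1) :
    ((1 - r ^ 2) / (2 * r)) ^ 2 ≠ -1 ∧ ((1 - r ^ 2) / (2 * r)) ^ 2 ≠ 0 ∧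
    ((1 - r ^ 2) / (2 * r)) ^ 2 ≠ 1 ∧
    ∃ h : (Ecurve (((1 - r ^ 2) / (2 * r)) ^ 2)).Nonsingular
        ((1 - r) * (1 + r) ^ 3 / (4 * r ^ 3))
        ((1 - r) * (1 + r) ^ 3 * (1 + r ^ 2) * (r ^ 2 - 2 * r - 1) / (16 * r ^ 5)),
      addOrderOf (Point.some _ _ h) = 8 := by
  have ht0 := orderEightParam_ne_zero hr1 hr0 hr1'
  have ht1 := orderEightParam_ne_neg_one r
  refine ⟨ht1, ht0, orderEightParam_ne_one hr0, nonsingular_orderEight hr1 hr0 hr1', ?_⟩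
  exact addOrderOf_eq_eight_of_two_nsmul (two_nsmul_orderEight hr1 hr0 hr1')
    (Ecurve.two_nsmul_some_t_neg_t_mul_t_add_one ht0 ht1) (Ecurve.two_nsmul_some_zero_zero ht0)
    (Point.some_ne_zero _)
end
end

section
/- Let t ∈ ℚ \ {−1,0,1} and let (u,v) ∈ E_t(ℚ) be an affine point with v ≠ 0. If [2](u,v) = (t, t(t+1)) in the group E_t(ℚ) (i.e. doubling the point (u,v) yields the point (t, t(t+1))), then t = ((u²−t²)/(2v))²; in particular t is a square in ℚ. -/
open WeierstrassCurve WeierstrassCurve.Affine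

noncomputable section

/-! On a curve `y² = x³ + a₂x² + a₄x` the duplication formula for the `x`-coordinate collapses to
the perfect square `x([2](x, y)) = ((x² - a₄) / (2y))²`: the numerator
`(3x² + 2a₂x + a₄)² - 4(x + x + a₂)y²` of `λ² - a₂ - 2x` becomes `(x² - a₄)²` once `y²` is
eliminated with the curve equation. With `x([2]P) = t` this makes `t` a square. -/

namespace WeierstrassCurve.Affine

variable {F : Type*} [Field F] {W : Affine F}

lemma Y_ne_negY_of_a₁_a₃ (h₁ : W.a₁ = 0) (h₃ : W.a₃ = 0) {x y : F} (hy : 2 * y ≠ 0) :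
    y ≠ W.negY x y := by
  rw [negY, h₁, h₃]
  intro h
  exact hy (by linear_combination h)

variable [DecidableEq F]

lemma addX_slope_self_of_a₁_a₃_a₆ (h₁ : W.a₁ = 0) (h₃ : W.a₃ = 0) (h₆ : W.a₆ = 0) {x y : F}
    (h : W.Equation x y) (hy : 2 * y ≠ 0) :
    W.addX x x (W.slope x x y y) = ((x ^ 2 - W.a₄) / (2 * y)) ^ 2 := by
  have hcurve : y ^ 2 = x ^ 3 + W.a₂ * x ^ 2 + W.a₄ * x := by
    have := (equation_iff x y).mp h
    rw [h₁, h₃, h₆] at this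
    linear_combination this
  have hslope : W.slope x x y y * (2 * y) = 3 * x ^ 2 + 2 * W.a₂ * x + W.a₄ := by
    rw [slope_of_Y_ne rfl (Y_ne_negY_of_a₁_a₃ h₁ h₃ hy), negY, h₁, h₃,
      show y - (-y - 0 * x - 0) = 2 * y by ring, div_mul_cancel₀ _ hy]
    ring
  rw [addX, h₁, div_pow, eq_div_iff (pow_ne_zero 2 hy)]
  linear_combination (W.slope x x y y * (2 * y) + 3 * x ^ 2 + 2 * W.a₂ * x + W.a₄) * hslope
    - 4 * (W.a₂ + 2 * x) * hcurve

lemma X_eq_of_some_add_self_eq_some (h₁ : W.a₁ = 0) (h₃ : W.a₃ = 0) (h₆ : W.a₆ = 0)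
    {x y x' y' : F} {h : W.Nonsingular x y} {h' : W.Nonsingular x' y'} (hy : 2 * y ≠ 0)
    (hdouble : Point.some _ _ h + Point.some _ _ h = Point.some _ _ h') :
    x' = ((x ^ 2 - W.a₄) / (2 * y)) ^ 2 := by
  rw [Point.add_self_of_Y_ne (Y_ne_negY_of_a₁_a₃ h₁ h₃ hy)] at hdouble
  rw [← (Point.some.inj hdouble).1, addX_slope_self_of_a₁_a₃_a₆ h₁ h₃ h₆ h.1 hy]

end WeierstrassCurve.Affine

theorem statement9_general (t u v : ℚ)
    (h : (Ecurve t).Nonsingular u v) (hv : v ≠ 0)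
    (h' : (Ecurve t).Nonsingular t (t * (t + 1)))
    (hdouble : Point.some _ _ h + Point.some _ _ h = Point.some _ _ h') :
    t = ((u ^ 2 - t ^ 2) / (2 * v)) ^ 2 ∧ IsSquare t := by
  have key : t = ((u ^ 2 - t ^ 2) / (2 * v)) ^ 2 :=
    X_eq_of_some_add_self_eq_some rfl rfl rfl (mul_ne_zero two_ne_zero hv) hdouble
  exact ⟨key, ⟨(u ^ 2 - t ^ 2) / (2 * v), key.trans (sq _)⟩⟩

theorem statement9 (t u v : ℚ) (ht1 : t ≠ -1) (ht0 : t ≠ 0) (ht1' : t ≠ 1)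
    (h : (Ecurve t).Nonsingular u v) (hv : v ≠ 0)
    (h' : (Ecurve t).Nonsingular t (t * (t + 1)))
    (hdouble : Point.some _ _ h + Point.some _ _ h = Point.some _ _ h') :
    t = ((u ^ 2 - t ^ 2) / (2 * v)) ^ 2 ∧ IsSquare t :=
  statement9_general t u v h hv h' hdouble
end
end
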